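/- Let A be a real tensor of order m and dimension n (with m ≥ 2, n ≥ 1). Then A is an R₀-tensor (i.e., x = 0 is the unique solution of TCP(A,0)) if and only if for every q ∈ ℝⁿ the solution set of TCP(A,q) is bounded. -/
import Mathlib


open Finset

/-- The `i`-th component of `A x^{m-1}` for a real tensor `A` of order `m = k+1`
and dimension `n`. -/
def tmul {n k : ℕ} (A : (Fin (k + 1) → Fin n) → ℝ) (x : Fin n → ℝ) : Fin n → ℝ :=
  fun i => ∑ f : Fin k → Fin n, A (Fin.cons i f) * ∏ j, x (f j)

/-- `A x^m := xᵀ (A x^{m-1})`. -/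
def tpow {n k : ℕ} (A : (Fin (k + 1) → Fin n) → ℝ) (x : Fin n → ℝ) : ℝ :=
  ∑ i, x i * tmul A x i

/-- `x` is a solution of the tensor complementarity problem TCP(A, q). -/
def TCPSol {n k : ℕ} (A : (Fin (k + 1) → Fin n) → ℝ) (q x : Fin n → ℝ) : Prop :=
  (∀ i, 0 ≤ x i) ∧ (∀ i, 0 ≤ q i + tmul A x i) ∧ ∑ i, x i * (q i + tmul A x i) = 0

/-- `A` is an S-tensor: the system `A x^{m-1} > 0, x > 0` has a solution. -/
def STensor {n k : ℕ} (A : (Fin (k + 1) → Fin n) → ℝ) : Prop :=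
  ∃ x : Fin n → ℝ, (∀ i, 0 < x i) ∧ ∀ i, 0 < tmul A x i

/-- `A` is strictly semi-positive. -/
def StrictlySemiPositive {n k : ℕ} (A : (Fin (k + 1) → Fin n) → ℝ) : Prop :=
  ∀ x : Fin n → ℝ, (∀ i, 0 ≤ x i) → x ≠ 0 → ∃ j, 0 < x j ∧ 0 < tmul A x j

/-- `A` is an R₀-tensor: `x = 0` is the unique solution of TCP(A, 0). -/
def R0Tensor {n k : ℕ} (A : (Fin (k + 1) → Fin n) → ℝ) : Prop :=
  ∀ x : Fin n → ℝ, TCPSol A (fun _ => 0) x ↔ x = 0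

/-- `A` is a symmetric tensor: entries invariant under permutations of the indices. -/
def TSymmetric {n k : ℕ} (A : (Fin (k + 1) → Fin n) → ℝ) : Prop :=
  ∀ (σ : Equiv.Perm (Fin (k + 1))) (g : Fin (k + 1) → Fin n), A (g ∘ σ) = A g

/-- The `p`-norm `(∑ |x_i|^p)^{1/p}` of a vector. -/
noncomputable def pnorm {n : ℕ} (p : ℝ) (x : Fin n → ℝ) : ℝ :=
  (∑ i, |x i| ^ p) ^ (1 / p)

/-- The `∞`-norm `max_i |x_i|` of a vector. -/
noncomputable def inftynorm {n : ℕ} (x : Fin n → ℝ) : ℝ :=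
  ⨆ i, |x i|

lemma tmul_smul {n k : ℕ} (A : (Fin (k + 1) → Fin n) → ℝ) (c : ℝ) (x : Fin n → ℝ) (i : Fin n) :
    tmul A (c • x) i = c ^ k * tmul A x i := by
  unfold tmul
  rw [Finset.mul_sum]
  refine Finset.sum_congr rfl fun f _ => ?_
  simp [Finset.prod_mul_distrib]
  ring

lemma tmul_zero' {n k : ℕ} (hk : 1 ≤ k) (A : (Fin (k + 1) → Fin n) → ℝ) (i : Fin n) :
    tmul A (0 : Fin n → ℝ) i = 0 := by
  unfold tmul
  refine Finset.sum_eq_zero fun f _ => ?_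
  simp [Finset.prod_const, zero_pow (by omega : k ≠ 0)]

lemma tmul_continuous {n k : ℕ} (A : (Fin (k + 1) → Fin n) → ℝ) (i : Fin n) :
    Continuous fun x : Fin n → ℝ => tmul A x i := by
  unfold tmul
  exact continuous_finset_sum _ fun f _ =>
    continuous_const.mul (continuous_finset_prod _ fun j _ => continuous_apply _)

theorem stmt4 {n k : ℕ} (hn : 1 ≤ n) (hk : 1 ≤ k) (A : (Fin (k + 1) → Fin n) → ℝ) :
    R0Tensor A ↔ ∀ q : Fin n → ℝ, Bornology.IsBounded {x : Fin n → ℝ | TCPSol A q x} := by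
  constructor
  · -- R0 implies bounded solution sets
    intro hR q
    by_contra hnb
    rw [isBounded_iff_forall_norm_le] at hnb
    push_neg at hnb
    have hX : ∀ j : ℕ, ∃ x, TCPSol A q x ∧ (j : ℝ) < ‖x‖ := by
      intro j
      obtain ⟨x, hx, hxn⟩ := hnb (j : ℝ)
      exact ⟨x, hx, hxn⟩
    choose X hX1 hX2 using hX
    have hpos : ∀ j, 0 < ‖X j‖ := fun j => lt_of_le_of_lt (Nat.cast_nonneg j) (hX2 j)
    set Y : ℕ → (Fin n → ℝ) := fun j => ‖X j‖⁻¹ • X j with hYdef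
    have hY1 : ∀ j, ‖Y j‖ = 1 := by
      intro j
      rw [hYdef]
      simp [norm_smul, abs_of_pos (inv_pos.mpr (hpos j)),
        inv_mul_cancel₀ (ne_of_gt (hpos j))]
    have hYmem : ∀ j, Y j ∈ Metric.sphere (0 : Fin n → ℝ) 1 := by
      intro j; simpa [mem_sphere_zero_iff_norm] using hY1 j
    obtain ⟨y, hy_mem, φ, hφ, hconv⟩ :=
      (isCompact_sphere (0 : Fin n → ℝ) 1).tendsto_subseq hYmem
    have hnt : Filter.Tendsto (fun j => ‖X (φ j)‖) Filter.atTop Filter.atTop := by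
      refine Filter.tendsto_atTop_mono (fun j => ?_) tendsto_natCast_atTop_atTop
      calc (j : ℝ) ≤ (φ j : ℝ) := Nat.cast_le.mpr (hφ.le_apply)
        _ ≤ ‖X (φ j)‖ := le_of_lt (hX2 (φ j))
    have hinv0 : Filter.Tendsto (fun j => ‖X (φ j)‖⁻¹) Filter.atTop (nhds 0) :=
      hnt.inv_tendsto_atTop
    have hinvk : Filter.Tendsto (fun j => (‖X (φ j)‖⁻¹) ^ k) Filter.atTop (nhds 0) := by
      have := hinv0.pow k
      rwa [zero_pow (by omega : k ≠ 0)] at this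
    -- key identities
    have hYc : ∀ j i, Y j i = ‖X j‖⁻¹ * X j i := fun j i => rfl
    have hYt : ∀ j i, tmul A (Y j) i = (‖X j‖⁻¹) ^ k * tmul A (X j) i := fun j i =>
      tmul_smul A _ _ i
    -- y is a solution of TCP(A, 0)
    have hy0 : y = 0 := by
      refine (hR y).mp ⟨?_, ?_, ?_⟩
      · intro i
        refine ge_of_tendsto' (((continuous_apply i).tendsto y).comp hconv) fun j => ?_
        exact mul_nonneg (inv_nonneg.mpr (norm_nonneg _)) ((hX1 (φ j)).1 i)
      · intro i
        have hlim : Filter.Tendsto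
            (fun j => (‖X (φ j)‖⁻¹) ^ k * q i + tmul A (Y (φ j)) i)
            Filter.atTop (nhds (0 * q i + tmul A y i)) :=
          (hinvk.mul_const (q i)).add (((tmul_continuous A i).tendsto y).comp hconv)
        have hge : ∀ j, 0 ≤ (‖X (φ j)‖⁻¹) ^ k * q i + tmul A (Y (φ j)) i := by
          intro j
          rw [hYt]
          have h1 : 0 ≤ q i + tmul A (X (φ j)) i := (hX1 (φ j)).2.1 i
          have h2 : 0 ≤ (‖X (φ j)‖⁻¹) ^ k :=
            pow_nonneg (inv_nonneg.mpr (norm_nonneg _)) k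
          nlinarith [mul_nonneg h2 h1]
        have := ge_of_tendsto' hlim hge
        simpa using this
      · -- complementarity for y
        have hRcont : Continuous fun x : Fin n → ℝ => ∑ i, x i * q i :=
          continuous_finset_sum _ fun i _ => (continuous_apply i).mul continuous_const
        have hScont : Continuous fun x : Fin n → ℝ => ∑ i, x i * tmul A x i :=
          continuous_finset_sum _ fun i _ => (continuous_apply i).mul (tmul_continuous A i)
        have hSj : ∀ j, (‖X j‖⁻¹) ^ k * (∑ i, Y j i * q i)
            + ∑ i, Y j i * tmul A (Y j) i = 0 := by
          intro j
          have hterm : ∀ i, (‖X j‖⁻¹) ^ k * (Y j i * q i) + Y j i * tmul A (Y j) i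
              = (‖X j‖⁻¹) ^ (k + 1) * (X j i * (q i + tmul A (X j) i)) := by
            intro i
            rw [hYt]
            simp only [hYc]
            ring
          rw [Finset.mul_sum, ← Finset.sum_add_distrib,
            Finset.sum_congr rfl fun i _ => hterm i, ← Finset.mul_sum, (hX1 j).2.2, mul_zero]
        have hlim : Filter.Tendsto
            (fun j => (‖X (φ j)‖⁻¹) ^ k * (∑ i, Y (φ j) i * q i)
              + ∑ i, Y (φ j) i * tmul A (Y (φ j)) i)
            Filter.atTop
            (nhds (0 * (∑ i, y i * q i) + ∑ i, y i * tmul A y i)) :=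
          (hinvk.mul ((hRcont.tendsto y).comp hconv)).add ((hScont.tendsto y).comp hconv)
        have hconst : Filter.Tendsto
            (fun j => (‖X (φ j)‖⁻¹) ^ k * (∑ i, Y (φ j) i * q i)
              + ∑ i, Y (φ j) i * tmul A (Y (φ j)) i)
            Filter.atTop (nhds 0) := by
          have : (fun j => (‖X (φ j)‖⁻¹) ^ k * (∑ i, Y (φ j) i * q i)
              + ∑ i, Y (φ j) i * tmul A (Y (φ j)) i) = fun _ => (0 : ℝ) := by
            funext j; exact hSj (φ j)
          rw [this]
          exact tendsto_const_nhds
        have hfin := tendsto_nhds_unique hlim hconst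
        simpa using hfin
    have : ‖y‖ = 1 := mem_sphere_zero_iff_norm.mp hy_mem
    rw [hy0] at this
    simp at this
  · -- bounded solution sets imply R0
    intro hb x
    constructor
    · intro hx
      by_contra hne
      obtain ⟨C, hC⟩ := isBounded_iff_forall_norm_le.mp (hb (fun _ => 0))
      have hxpos : 0 < ‖x‖ := norm_pos_iff.mpr hne
      have hCx : ‖x‖ ≤ C := hC x hx
      set t : ℝ := (C + 1) / ‖x‖ with ht
      have htpos : 0 < t := div_pos (by linarith [norm_nonneg x]) hxpos
      have hsol : TCPSol A (fun _ => 0) (t • x) := by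
        refine ⟨fun i => mul_nonneg htpos.le (hx.1 i), fun i => ?_, ?_⟩
        · rw [tmul_smul]
          have := hx.2.1 i
          simp only [zero_add] at this ⊢
          exact mul_nonneg (pow_nonneg htpos.le k) this
        · have : ∀ i, (t • x) i * ((fun _ => (0:ℝ)) i + tmul A (t • x) i)
              = t ^ (k + 1) * (x i * ((fun _ => (0:ℝ)) i + tmul A x i)) := by
            intro i
            rw [tmul_smul]
            simp only [Pi.smul_apply, smul_eq_mul, zero_add]
            ring
          rw [Finset.sum_congr rfl fun i _ => this i, ← Finset.mul_sum, hx.2.2, mul_zero]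
      have := hC (t • x) hsol
      rw [norm_smul, Real.norm_eq_abs, abs_of_pos htpos, ht,
        div_mul_cancel₀ _ (ne_of_gt hxpos)] at this
      linarith
    · rintro rfl
      refine ⟨fun i => le_refl 0, fun i => ?_, ?_⟩
      · rw [tmul_zero' hk]; simp
      · simp
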